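/- Let F : (0,∞) × ℝⁿ → ℝⁿ be measurable with ‖F‖_{Y^1} < ∞. Then for every R > 0, x̃ ∈ ℝⁿ, and m ∈ ℕ₀: ∫_{R²·2^{−(m+1)}}^{R²·2^{−m}} ∫_{B_R(x̃)} R^{−(n+1)} |F(s,y)| dy ds ≤ C · 2^{−m/2} · ‖F‖_{Y^1}, with C depending only on n. -/

import Mathlib

/-!
Average the defining bound of `Ynorm1` over the centres of the cylinders. Put `ρ = R 2^{-m/2}`, so
that the slab is `(ρ²/2, ρ²] × B_R(x̃)`. Each of its points lies in `Q_ρ(z)` for every `z` in a ball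
of radius `ρ` contained in `B_{R+ρ}(x̃)`, so by Tonelli `|B_ρ|` times the slab integral is at most
`∫_{B_{R+ρ}(x̃)} ∫_{Q_ρ(z)} |F| dz ≤ |B_{2R}| |Q_ρ| ρ⁻¹ ‖F‖_{Y^1}`. Since `|Q_ρ| = ρ²/2 · |B_ρ|`,
the slab integral is at most `ρ/2 · |B_{2R}| ‖F‖_{Y^1}`, and `R^{-(n+1)} ρ R^n = 2^{-m/2}`.
-/

open MeasureTheory
open scoped ENNReal NNReal

/-- The parabolic cylinder `Q_ρ(z) = [ρ²/2, ρ²] × B_ρ(z)`. -/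
def Qcyl (n : ℕ) (R : ℝ) (z : EuclideanSpace ℝ (Fin n)) :
    Set (ℝ × EuclideanSpace ℝ (Fin n)) :=
  Set.Icc (R ^ 2 / 2) (R ^ 2) ×ˢ Metric.ball z R

/-- The Carleson-type norm `‖F‖_{Y^1} = sup_{z, ρ>0} ρ ⨍_{Q_ρ(z)} |F|`. -/
noncomputable def Ynorm1 (n : ℕ)
    (F : ℝ × EuclideanSpace ℝ (Fin n) → EuclideanSpace ℝ (Fin n)) : ℝ≥0∞ :=
  ⨆ (z : EuclideanSpace ℝ (Fin n)) (R : ℝ) (_ : 0 < R),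
    ENNReal.ofReal R *
      ((volume (Qcyl n R z))⁻¹ * ∫⁻ p in Qcyl n R z, (‖F p‖₊ : ℝ≥0∞))

open Metric Set

section Averaging

variable {X E : Type*} [MeasurableSpace X] {ν : Measure X} [SFinite ν]
  [NormedAddCommGroup E] [SecondCountableTopology E] [MeasurableSpace E] [BorelSpace E]
  {μ : Measure E} [μ.IsAddHaarMeasure] [SFinite μ]

theorem measure_ball_mul_setLIntegral_prod_ball_le {g : X × E → ℝ≥0∞} (hg : Measurable g)
    {I : Set X} (hI : MeasurableSet I) (x₀ : E) (R ρ : ℝ) :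
    μ (ball 0 ρ) * ∫⁻ p in I ×ˢ ball x₀ R, g p ∂ν.prod μ ≤
      ∫⁻ z in ball x₀ (R + ρ), ∫⁻ p in I ×ˢ ball z ρ, g p ∂ν.prod μ ∂μ := by
  set H : E → X × E → ℝ≥0∞ := fun z => (I ×ˢ ball z ρ).indicator g
  have hH : Measurable (Function.uncurry H) := by
    refine (hg.comp measurable_snd).indicator ?_
    exact (measurable_snd.fst hI).inter
      (measurableSet_lt (measurable_snd.snd.dist measurable_fst) measurable_const)
  have hH_slab : ∀ p ∈ I ×ˢ ball x₀ R, ∫⁻ z in ball x₀ (R + ρ), H z p ∂μ = g p * μ (ball 0 ρ) := by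
    rintro p ⟨hpI, hpR⟩
    have hball : ball p.2 ρ ⊆ ball x₀ (R + ρ) :=
      ball_subset_ball' (by rw [mem_ball] at hpR; linarith)
    have hH_ball : ∀ z, H z p = (ball p.2 ρ).indicator (fun _ => g p) z := by
      intro z
      simp [H, Set.indicator, hpI, dist_comm]
    simp_rw [hH_ball]
    rw [lintegral_indicator_const measurableSet_ball, Measure.restrict_apply measurableSet_ball,
      inter_eq_left.2 hball, Measure.addHaar_ball_center]
  calc μ (ball 0 ρ) * ∫⁻ p in I ×ˢ ball x₀ R, g p ∂ν.prod μ
      = ∫⁻ p in I ×ˢ ball x₀ R, ∫⁻ z in ball x₀ (R + ρ), H z p ∂μ ∂ν.prod μ := by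
        rw [mul_comm, ← lintegral_mul_const _ hg]
        exact (setLIntegral_congr_fun (hI.prod measurableSet_ball) hH_slab).symm
    _ ≤ ∫⁻ p, ∫⁻ z in ball x₀ (R + ρ), H z p ∂μ ∂ν.prod μ := setLIntegral_le_lintegral _ _
    _ = ∫⁻ z in ball x₀ (R + ρ), ∫⁻ p, H z p ∂ν.prod μ ∂μ :=
        (lintegral_lintegral_swap hH.aemeasurable).symm
    _ = ∫⁻ z in ball x₀ (R + ρ), ∫⁻ p in I ×ˢ ball z ρ, g p ∂ν.prod μ ∂μ := by
        simp only [H, lintegral_indicator (hI.prod measurableSet_ball)]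

end Averaging

section Cylinders

variable {n : ℕ}

theorem volume_Qcyl (ρ : ℝ) (z : EuclideanSpace ℝ (Fin n)) :
    volume (Qcyl n ρ z) =
      ENNReal.ofReal (ρ ^ 2 / 2) * volume (ball (0 : EuclideanSpace ℝ (Fin n)) ρ) := by
  rw [Qcyl, Measure.volume_eq_prod, Measure.prod_prod, Real.volume_Icc,
    Measure.addHaar_ball_center, sub_half]

theorem setLIntegral_Qcyl_le_Ynorm1 (F : ℝ × EuclideanSpace ℝ (Fin n) → EuclideanSpace ℝ (Fin n))
    {ρ : ℝ} (hρ : 0 < ρ) (z : EuclideanSpace ℝ (Fin n)) :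
    ∫⁻ p in Qcyl n ρ z, (‖F p‖₊ : ℝ≥0∞) ≤
      ENNReal.ofReal (ρ / 2) * volume (ball (0 : EuclideanSpace ℝ (Fin n)) ρ) * Ynorm1 n F := by
  have hQ : volume (Qcyl n ρ z) = ENNReal.ofReal (ρ / 2) *
      volume (ball (0 : EuclideanSpace ℝ (Fin n)) ρ) * ENNReal.ofReal ρ := by
    rw [volume_Qcyl, mul_right_comm, ← ENNReal.ofReal_mul (by positivity)]
    congr 2
    ring
  have hQ0 : volume (Qcyl n ρ z) ≠ 0 := by
    rw [hQ]
    exact mul_ne_zero (mul_ne_zero (by simpa using hρ) (measure_ball_pos _ _ hρ).ne')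
      (by simpa using hρ)
  have hQtop : volume (Qcyl n ρ z) ≠ ∞ := by
    rw [hQ]
    exact ENNReal.mul_ne_top (ENNReal.mul_ne_top ENNReal.ofReal_ne_top measure_ball_lt_top.ne)
      ENNReal.ofReal_ne_top
  calc ∫⁻ p in Qcyl n ρ z, (‖F p‖₊ : ℝ≥0∞)
      = ENNReal.ofReal (ρ / 2) * volume (ball (0 : EuclideanSpace ℝ (Fin n)) ρ) *
          (ENNReal.ofReal ρ * ((volume (Qcyl n ρ z))⁻¹ * ∫⁻ p in Qcyl n ρ z, (‖F p‖₊ : ℝ≥0∞))) := by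
        rw [← mul_assoc, ← hQ, ENNReal.mul_inv_cancel_left hQ0 hQtop]
    _ ≤ ENNReal.ofReal (ρ / 2) * volume (ball (0 : EuclideanSpace ℝ (Fin n)) ρ) * Ynorm1 n F := by
        gcongr
        exact le_iSup₂_of_le z ρ (le_iSup_of_le hρ le_rfl)

theorem setLIntegral_Icc_prod_ball_le_Ynorm1
    {F : ℝ × EuclideanSpace ℝ (Fin n) → EuclideanSpace ℝ (Fin n)} (hF : Measurable F)
    {ρ : ℝ} (hρ : 0 < ρ) (x₀ : EuclideanSpace ℝ (Fin n)) (R : ℝ) :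
    ∫⁻ p in Icc (ρ ^ 2 / 2) (ρ ^ 2) ×ˢ ball x₀ R, (‖F p‖₊ : ℝ≥0∞) ≤
      ENNReal.ofReal (ρ / 2) * volume (ball x₀ (R + ρ)) * Ynorm1 n F := by
  set V := volume (ball (0 : EuclideanSpace ℝ (Fin n)) ρ)
  have hV0 : V ≠ 0 := (measure_ball_pos _ _ hρ).ne'
  rw [← ENNReal.mul_le_mul_iff_right hV0 measure_ball_lt_top.ne, Measure.volume_eq_prod]
  calc V * ∫⁻ p in Icc (ρ ^ 2 / 2) (ρ ^ 2) ×ˢ ball x₀ R, (‖F p‖₊ : ℝ≥0∞) ∂volume.prod volume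
      ≤ ∫⁻ z in ball x₀ (R + ρ), ∫⁻ p in Qcyl n ρ z, (‖F p‖₊ : ℝ≥0∞) :=
        measure_ball_mul_setLIntegral_prod_ball_le hF.nnnorm.coe_nnreal_ennreal measurableSet_Icc
          x₀ R ρ
    _ ≤ ∫⁻ _ in ball x₀ (R + ρ), ENNReal.ofReal (ρ / 2) * V * Ynorm1 n F :=
        lintegral_mono fun z => setLIntegral_Qcyl_le_Ynorm1 F hρ z
    _ = V * (ENNReal.ofReal (ρ / 2) * volume (ball x₀ (R + ρ)) * Ynorm1 n F) := by
        rw [setLIntegral_const]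
        ring

theorem setLIntegral_Ioc_prod_ball_le_Ynorm1
    {F : ℝ × EuclideanSpace ℝ (Fin n) → EuclideanSpace ℝ (Fin n)} (hF : Measurable F)
    {ρ R : ℝ} (hρ : 0 < ρ) (hρR : ρ ≤ R) (x₀ : EuclideanSpace ℝ (Fin n)) :
    ∫⁻ p in Ioc (ρ ^ 2 / 2) (ρ ^ 2) ×ˢ ball x₀ R, (‖F p‖₊ : ℝ≥0∞) ≤
      ENNReal.ofReal (ρ / 2) * volume (ball x₀ (2 * R)) * Ynorm1 n F :=
  calc ∫⁻ p in Ioc (ρ ^ 2 / 2) (ρ ^ 2) ×ˢ ball x₀ R, (‖F p‖₊ : ℝ≥0∞)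
      ≤ ∫⁻ p in Icc (ρ ^ 2 / 2) (ρ ^ 2) ×ˢ ball x₀ R, (‖F p‖₊ : ℝ≥0∞) :=
        lintegral_mono_set (prod_mono Ioc_subset_Icc_self subset_rfl)
    _ ≤ ENNReal.ofReal (ρ / 2) * volume (ball x₀ (R + ρ)) * Ynorm1 n F :=
        setLIntegral_Icc_prod_ball_le_Ynorm1 hF hρ x₀ R
    _ ≤ ENNReal.ofReal (ρ / 2) * volume (ball x₀ (2 * R)) * Ynorm1 n F := by
        gcongr
        linarith

end Cylinders

theorem Ioc_sq_mul_two_rpow_neg (R x : ℝ) :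
    Ioc (R ^ 2 * 2 ^ (-(x + 1))) (R ^ 2 * 2 ^ (-x)) =
      Ioc ((R * 2 ^ (-x / 2)) ^ 2 / 2) ((R * 2 ^ (-x / 2)) ^ 2) := by
  have hsq : ((2 : ℝ) ^ (-x / 2)) ^ 2 = 2 ^ (-x) := by
    rw [← Real.rpow_mul_natCast zero_le_two]
    norm_num
  rw [mul_pow, hsq, neg_add, Real.rpow_add two_pos, Real.rpow_neg_one, ← mul_assoc, div_eq_mul_inv]

theorem slab_estimate_general (n : ℕ) :
    ∃ C : ℝ, 0 < C ∧
      ∀ (F : ℝ × EuclideanSpace ℝ (Fin n) → EuclideanSpace ℝ (Fin n)), Measurable F →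
      ∀ (R : ℝ), 0 < R → ∀ (x₀ : EuclideanSpace ℝ (Fin n)) (m : ℕ),
        (∫⁻ p in Set.Ioc (R ^ 2 * 2 ^ (-((m : ℝ) + 1))) (R ^ 2 * 2 ^ (-(m : ℝ))) ×ˢ
            Metric.ball x₀ R,
          ENNReal.ofReal (R ^ (-((n : ℝ) + 1))) * (‖F p‖₊ : ℝ≥0∞))
          ≤ ENNReal.ofReal (C * 2 ^ (-(m : ℝ) / 2)) * Ynorm1 n F := by
  set b := (volume (ball (0 : EuclideanSpace ℝ (Fin n)) 1)).toReal
  have hb : 0 < b := ENNReal.toReal_pos (measure_ball_pos _ _ one_pos).ne' measure_ball_lt_top.ne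
  refine ⟨2 ^ n * b / 2, by positivity, fun F hF R hR x₀ m => ?_⟩
  set t : ℝ := 2 ^ (-(m : ℝ) / 2)
  have ht : 0 < t := by positivity
  have ht1 : t ≤ 1 := Real.rpow_le_one_of_one_le_of_nonpos one_le_two
    (by linarith [(m.cast_nonneg : (0 : ℝ) ≤ m)])
  have hvol : volume (ball x₀ (2 * R)) = ENNReal.ofReal ((2 * R) ^ n * b) := by
    rw [Measure.addHaar_ball_of_pos _ _ (by positivity), finrank_euclideanSpace_fin,
      ENNReal.ofReal_mul (by positivity), ENNReal.ofReal_toReal measure_ball_lt_top.ne]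
  have hR_pow : R ^ (-((n : ℝ) + 1)) = (R ^ (n + 1))⁻¹ := by
    rw [← Real.rpow_natCast, ← Real.rpow_neg hR.le]
    push_cast
    rfl
  rw [lintegral_const_mul _ hF.nnnorm.coe_nnreal_ennreal, Ioc_sq_mul_two_rpow_neg]
  calc ENNReal.ofReal (R ^ (-((n : ℝ) + 1))) *
        ∫⁻ p in Ioc ((R * t) ^ 2 / 2) ((R * t) ^ 2) ×ˢ ball x₀ R, (‖F p‖₊ : ℝ≥0∞)
      ≤ ENNReal.ofReal (R ^ (-((n : ℝ) + 1))) *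
          (ENNReal.ofReal (R * t / 2) * volume (ball x₀ (2 * R)) * Ynorm1 n F) := by
        gcongr
        exact setLIntegral_Ioc_prod_ball_le_Ynorm1 hF (by positivity) (by nlinarith) x₀
    _ = ENNReal.ofReal (2 ^ n * b / 2 * t) * Ynorm1 n F := by
        rw [hvol, ← ENNReal.ofReal_mul (by positivity), ← mul_assoc,
          ← ENNReal.ofReal_mul (by positivity), hR_pow]
        congr 2
        field_simp
        ring

/-- Off-diagonal slab estimate: for every `R > 0`, `x̃` and `m ∈ ℕ`,
`∫_{R²2^{-(m+1)}}^{R²2^{-m}} ∫_{B_R(x̃)} R^{-(n+1)} |F| ≤ C 2^{-m/2} ‖F‖_{Y^1}`. -/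
theorem slab_estimate (n : ℕ) (hn : 1 ≤ n) :
    ∃ C : ℝ, 0 < C ∧
      ∀ (F : ℝ × EuclideanSpace ℝ (Fin n) → EuclideanSpace ℝ (Fin n)), Measurable F →
      ∀ (R : ℝ), 0 < R → ∀ (x₀ : EuclideanSpace ℝ (Fin n)) (m : ℕ),
        (∫⁻ p in Set.Ioc (R ^ 2 * 2 ^ (-((m : ℝ) + 1))) (R ^ 2 * 2 ^ (-(m : ℝ))) ×ˢ
            Metric.ball x₀ R,
          ENNReal.ofReal (R ^ (-((n : ℝ) + 1))) * (‖F p‖₊ : ℝ≥0∞))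
          ≤ ENNReal.ofReal (C * 2 ^ (-(m : ℝ) / 2)) * Ynorm1 n F :=
  slab_estimate_general n
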